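/- arXiv:2002.07618 — 3 statements merged into one kernel-verified Lean document; each statement's English description precedes it below -/
import Mathlib

section
/- Any feasible solution to the Alt-TFO problem can be transformed into a feasible solution to the TFO problem of no higher cost: setting worker r to be hired (g_{rt} = 1) at every time step t contained in some hiring interval I with x(r,I) = 1, and keeping the same outsourcing decisions f_{rt}, yields an assignment in which every required skill of every task is covered by a hired or outsourced worker, and whose total TFO cost (hiring fees, salaries, and outsourcing fees) is at most the Alt-TFO cost Σ_r [ Σ_I Ĉ_r x(r,I) + Σ_t λ_r f_{rt} ] of the original solution. -/
open scoped BigOperators Classical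

/-- Parameters of a Team Formation with Outsourcing (TFO) instance with `n` workers and
`m` skills: worker `r` possesses the skill set `skills r ⊆ S`, and has an outsourcing
fee `outFee r = λ_r`, a hiring fee `hireFee r = C_r` and a per-step salary
`salary r = σ_r`. -/
structure TFOParams (n m : ℕ) where
  skills : Fin n → Finset (Fin m)
  outFee : Fin n → ℝ
  hireFee : Fin n → ℝ
  salary : Fin n → ℝ

/-- The workers that are newly hired at step `t` of a hiring schedule (the hiring fee is
paid exactly for these workers). -/
def newHires {n : ℕ} (hired : ℕ → Finset (Fin n)) (t : ℕ) : Finset (Fin n) :=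
  if t = 0 then hired 0 else hired t \ hired (t - 1)

/-- Total TFO cost of a schedule on the first `T` tasks: the hiring fee `C_r` for each
newly hired worker, the salary `σ_r` for every step a worker is hired, and the
outsourcing fee `λ_r` every time a worker is outsourced. -/
def tfoCost {n m : ℕ} (P : TFOParams n m) (T : ℕ)
    (hired outs : ℕ → Finset (Fin n)) : ℝ :=
  ∑ t ∈ Finset.range T,
    ((∑ r ∈ newHires hired t, P.hireFee r) + (∑ r ∈ hired t, P.salary r)
      + (∑ r ∈ outs t, P.outFee r))

/-- The schedule covers the task sequence: at every step `t < T`, every skill required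
by the task `J t` is possessed by some hired or outsourced worker. -/
def Covers {n m : ℕ} (P : TFOParams n m) (T : ℕ) (J : ℕ → Finset (Fin m))
    (hired outs : ℕ → Finset (Fin n)) : Prop :=
  ∀ t < T, ∀ ℓ ∈ J t, ∃ r, (r ∈ hired t ∨ r ∈ outs t) ∧ ℓ ∈ P.skills r

/-- Cost of an optimal offline solution, which knows the whole task sequence in
advance. -/
noncomputable def tfoOpt {n m : ℕ} (P : TFOParams n m) (T : ℕ)
    (J : ℕ → Finset (Fin m)) : ℝ :=
  sInf {c | ∃ hired outs, Covers P T J hired outs ∧ c = tfoCost P T hired outs}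

/-- Length of the fixed hiring interval of worker `r` in Alt-TFO: `η_r = ⌈C_r/σ_r⌉`. -/
noncomputable def eta {n m : ℕ} (P : TFOParams n m) (r : Fin n) : ℕ :=
  ⌈P.hireFee r / P.salary r⌉₊

/-- The workers hired at time `t` under the interval schedule `starts`
(`starts s` is the set of workers whose hiring interval starts at time `s`):
worker `r` is hired at `t` iff some interval `[s, s + η_r)` with `r ∈ starts s`
contains `t`. -/
noncomputable def altHired {n m : ℕ} (P : TFOParams n m)
    (starts : ℕ → Finset (Fin n)) (t : ℕ) : Finset (Fin n) :=
  Finset.univ.filter fun r => ∃ s ∈ Finset.range (t + 1), r ∈ starts s ∧ t < s + eta P r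

/-- Total Alt-TFO cost on the first `T` tasks: each hiring interval of worker `r` costs
the fixed amount `Ĉ_r = 3·C_r` (hiring fee plus all salaries of the interval), plus
the outsourcing fees. -/
noncomputable def altCost {n m : ℕ} (P : TFOParams n m) (T : ℕ)
    (starts outs : ℕ → Finset (Fin n)) : ℝ :=
  ∑ t ∈ Finset.range T,
    ((∑ r ∈ starts t, 3 * P.hireFee r) + (∑ r ∈ outs t, P.outFee r))

/-- An Alt-TFO schedule covers the task sequence. -/
def AltCovers {n m : ℕ} (P : TFOParams n m) (T : ℕ) (J : ℕ → Finset (Fin m))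
    (starts outs : ℕ → Finset (Fin n)) : Prop :=
  ∀ t < T, ∀ ℓ ∈ J t, ∃ r, (r ∈ altHired P starts t ∨ r ∈ outs t) ∧ ℓ ∈ P.skills r

lemma mem_altHired_iff {n m : ℕ} (P : TFOParams n m) (starts : ℕ → Finset (Fin n))
    (t : ℕ) (r : Fin n) :
    r ∈ altHired P starts t ↔ ∃ s, s ≤ t ∧ r ∈ starts s ∧ t < s + eta P r := by
  simp [altHired, Finset.mem_range, Nat.lt_succ_iff]

lemma swap_sum {n T : ℕ} (A : ℕ → Finset (Fin n)) (f : Fin n → ℝ) :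
    ∑ t ∈ Finset.range T, ∑ r ∈ A t, f r
      = ∑ r : Fin n, ∑ t ∈ Finset.range T, if r ∈ A t then f r else 0 := by
  have h : ∀ t, ∑ r ∈ A t, f r = ∑ r : Fin n, if r ∈ A t then f r else 0 := by
    intro t; rw [Finset.sum_ite_mem, Finset.univ_inter]
  simp_rw [h]
  exact Finset.sum_comm

/-- Any feasible solution to the Alt-TFO problem can be transformed
into a feasible solution to the TFO problem of no higher cost: setting worker `r` to be
hired at every time step contained in some chosen hiring interval (i.e. using the
hiring schedule `altHired P starts`) and keeping the same outsourcing decisions `outs`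
yields an assignment in which every required skill of every task is covered by a hired
or outsourced worker, and whose total TFO cost (hiring fees, salaries and outsourcing
fees) is at most the Alt-TFO cost `∑_r (Ĉ_r · #intervals of r + λ_r · #outsourcings)`
of the original solution. -/
theorem alt_solution_to_tfo_solution
    (n m T : ℕ) (P : TFOParams n m)
    (hσ : ∀ r, 0 < P.salary r) (hσC : ∀ r, P.salary r ≤ P.hireFee r)
    (hlam : ∀ r, 0 ≤ P.outFee r)
    (J : ℕ → Finset (Fin m))
    (starts outs : ℕ → Finset (Fin n))
    (hfeas : AltCovers P T J starts outs) :
    Covers P T J (altHired P starts) outs ∧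
      tfoCost P T (altHired P starts) outs ≤ altCost P T starts outs := by
  classical
  refine ⟨hfeas, ?_⟩
  -- Per-worker key inequality
  have key : ∀ r : Fin n,
      (∑ t ∈ Finset.range T,
          if r ∈ newHires (altHired P starts) t then P.hireFee r else 0)
        + (∑ t ∈ Finset.range T,
          if r ∈ altHired P starts t then P.salary r else 0)
      ≤ ∑ t ∈ Finset.range T, if r ∈ starts t then 3 * P.hireFee r else 0 := by
    intro r
    set η := eta P r with hηdef
    set N := (Finset.range T).filter (fun t => r ∈ newHires (altHired P starts) t) with hN
    set H := (Finset.range T).filter (fun t => r ∈ altHired P starts t) with hH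
    set K := (Finset.range T).filter (fun t => r ∈ starts t) with hK
    have hsumN : (∑ t ∈ Finset.range T,
        if r ∈ newHires (altHired P starts) t then P.hireFee r else 0)
        = N.card * P.hireFee r := by
      rw [Finset.sum_ite, Finset.sum_const, Finset.sum_const_zero, add_zero,
        nsmul_eq_mul]
    have hsumH : (∑ t ∈ Finset.range T,
        if r ∈ altHired P starts t then P.salary r else 0)
        = H.card * P.salary r := by
      rw [Finset.sum_ite, Finset.sum_const, Finset.sum_const_zero, add_zero,
        nsmul_eq_mul]
    have hsumK : (∑ t ∈ Finset.range T,
        if r ∈ starts t then 3 * P.hireFee r else 0)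
        = K.card * (3 * P.hireFee r) := by
      rw [Finset.sum_ite, Finset.sum_const, Finset.sum_const_zero, add_zero,
        nsmul_eq_mul]
    rw [hsumN, hsumH, hsumK]
    -- each new-hire time yields a start within range
    have hmemN : ∀ t ∈ N, r ∈ altHired P starts t ∧ t < T := by
      intro t ht
      rw [hN, Finset.mem_filter, Finset.mem_range] at ht
      refine ⟨?_, ht.1⟩
      rcases ht with ⟨_, hnew⟩
      unfold newHires at hnew
      by_cases h0 : t = 0
      · simpa [h0] using hnew
      · rw [if_neg h0, Finset.mem_sdiff] at hnew
        exact hnew.1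
    -- choice of witness start
    let f : ℕ → ℕ := fun t =>
      if h : ∃ s, s ≤ t ∧ r ∈ starts s ∧ t < s + η then h.choose else 0
    have hf : ∀ t ∈ N, f t ≤ t ∧ r ∈ starts (f t) ∧ t < f t + η := by
      intro t ht
      have := (mem_altHired_iff P starts t r).mp (hmemN t ht).1
      rw [show f t = if h : ∃ s, s ≤ t ∧ r ∈ starts s ∧ t < s + η then h.choose else 0
        from rfl, dif_pos this]
      exact this.choose_spec
    have hmaps : ∀ t ∈ N, f t ∈ K := by
      intro t ht
      obtain ⟨h1, h2, _⟩ := hf t ht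
      rw [hK, Finset.mem_filter, Finset.mem_range]
      exact ⟨lt_of_le_of_lt h1 (hmemN t ht).2, h2⟩
    have hinj : ∀ t₁ ∈ N, ∀ t₂ ∈ N, f t₁ = f t₂ → t₁ = t₂ := by
      -- helper: no two ordered distinct elements of N share a witness
      have aux : ∀ t₁ ∈ N, ∀ t₂ ∈ N, t₁ < t₂ → f t₁ ≠ f t₂ := by
        intro t₁ ht₁ t₂ ht₂ hlt heq
        obtain ⟨ha1, ha2, ha3⟩ := hf t₁ ht₁
        obtain ⟨hb1, hb2, hb3⟩ := hf t₂ ht₂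
        -- r is hired at time t₂ - 1
        have ht2pos : 0 < t₂ := Nat.lt_of_le_of_lt (Nat.zero_le _) hlt
        have hprev : r ∈ altHired P starts (t₂ - 1) := by
          rw [mem_altHired_iff]
          refine ⟨f t₂, ?_, hb2, ?_⟩
          · rw [← heq]
            omega
          · omega
        have : r ∈ newHires (altHired P starts) t₂ := by
          rw [hN, Finset.mem_filter] at ht₂; exact ht₂.2
        unfold newHires at this
        rw [if_neg (by omega : ¬ t₂ = 0), Finset.mem_sdiff] at this
        exact this.2 hprev
      intro t₁ ht₁ t₂ ht₂ heq
      rcases lt_trichotomy t₁ t₂ with h | h | h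
      · exact absurd heq (aux t₁ ht₁ t₂ ht₂ h)
      · exact h
      · exact absurd heq.symm (aux t₂ ht₂ t₁ ht₁ h)
    have hNK : N.card ≤ K.card := Finset.card_le_card_of_injOn f hmaps hinj
    -- hired times are covered by the intervals
    have hHsub : H ⊆ K.biUnion (fun s => Finset.Ico s (s + η)) := by
      intro t ht
      rw [hH, Finset.mem_filter, Finset.mem_range] at ht
      obtain ⟨htT, hmem⟩ := ht
      obtain ⟨s, hs1, hs2, hs3⟩ := (mem_altHired_iff P starts t r).mp hmem
      rw [Finset.mem_biUnion]
      refine ⟨s, ?_, ?_⟩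
      · rw [hK, Finset.mem_filter, Finset.mem_range]
        exact ⟨lt_of_le_of_lt hs1 htT, hs2⟩
      · rw [Finset.mem_Ico]; exact ⟨hs1, hs3⟩
    have hHK : H.card ≤ K.card * η := by
      calc H.card ≤ (K.biUnion (fun s => Finset.Ico s (s + η))).card :=
            Finset.card_le_card hHsub
        _ ≤ ∑ s ∈ K, (Finset.Ico s (s + η)).card := Finset.card_biUnion_le
        _ = ∑ s ∈ K, η := by simp [Nat.Ico_eq_range']
        _ = K.card * η := by rw [Finset.sum_const, smul_eq_mul]
    -- η·σ ≤ 2·C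
    have hσr := hσ r
    have hσCr := hσC r
    have hηle : (η : ℝ) ≤ P.hireFee r / P.salary r + 1 := by
      rw [hηdef]
      exact le_of_lt (Nat.ceil_lt_add_one (div_nonneg (le_trans hσr.le hσCr) hσr.le))
    have hησ : (η : ℝ) * P.salary r ≤ 2 * P.hireFee r := by
      have h1 : (η : ℝ) * P.salary r ≤ (P.hireFee r / P.salary r + 1) * P.salary r :=
        mul_le_mul_of_nonneg_right hηle hσr.le
      have h2 : (P.hireFee r / P.salary r + 1) * P.salary r
          = P.hireFee r + P.salary r := by
        field_simp
      linarith
    have hC0 : 0 ≤ P.hireFee r := le_trans hσr.le hσCr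
    have hNKr : (N.card : ℝ) ≤ K.card := Nat.cast_le.mpr hNK
    have hHKr : (H.card : ℝ) ≤ (K.card : ℝ) * η := by
      calc (H.card : ℝ) ≤ ((K.card * η : ℕ) : ℝ) := Nat.cast_le.mpr hHK
        _ = (K.card : ℝ) * η := by push_cast; ring
    have hK0 : (0:ℝ) ≤ K.card := Nat.cast_nonneg _
    nlinarith [mul_le_mul_of_nonneg_right hNKr hC0,
      mul_le_mul_of_nonneg_right hHKr hσr.le,
      mul_le_mul_of_nonneg_left hησ hK0]
  -- assemble the total cost inequality
  unfold tfoCost altCost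
  rw [Finset.sum_add_distrib, Finset.sum_add_distrib, Finset.sum_add_distrib]
  have h1 := swap_sum (T := T) (newHires (altHired P starts)) P.hireFee
  have h2 := swap_sum (T := T) (altHired P starts) P.salary
  have h3 := swap_sum (T := T) starts (fun r => 3 * P.hireFee r)
  rw [h1, h2, h3, ← Finset.sum_add_distrib]
  exact add_le_add (Finset.sum_le_sum fun r _ => key r) le_rfl
end

section
/- Any feasible solution to the TFO problem with total cost C^{TFO} can be converted into a feasible solution to the Alt-TFO problem whose total cost is at most 3·C^{TFO}. -/
open scoped BigOperators Classical

def isStartF {n m : ℕ} (P : TFOParams n m) (hired : ℕ → Finset (Fin n)) (r : Fin n) : ℕ → Prop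
  | t => r ∈ hired t ∧ ∀ s, s < t → isStartF P hired r s → s + eta P r ≤ t

lemma isStartF_iff {n m : ℕ} (P : TFOParams n m) (hired : ℕ → Finset (Fin n)) (r : Fin n) (t : ℕ) :
    isStartF P hired r t ↔ (r ∈ hired t ∧ ∀ s, s < t → isStartF P hired r s → s + eta P r ≤ t) := by
  rw [isStartF]

section lems
variable {n m : ℕ} (P : TFOParams n m) (hired : ℕ → Finset (Fin n)) (r : Fin n)

lemma eta_pos (hσ : 0 < P.salary r) (hC : 0 < P.hireFee r) : 0 < eta P r :=
  Nat.ceil_pos.mpr (div_pos hC hσ)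

lemma hire_le_eta_mul (hσ : 0 < P.salary r) :
    P.hireFee r ≤ (eta P r : ℝ) * P.salary r := by
  have := Nat.le_ceil (P.hireFee r / P.salary r)
  rw [div_le_iff₀ hσ] at this
  exact this

lemma start_mem_hired {t : ℕ} (h : isStartF P hired r t) : r ∈ hired t :=
  ((isStartF_iff P hired r t).mp h).1

lemma start_spacing {s t : ℕ} (hs : isStartF P hired r s) (ht : isStartF P hired r t)
    (hst : s < t) : s + eta P r ≤ t :=
  ((isStartF_iff P hired r t).mp ht).2 s hst hs

lemma hired_covered (hσ : 0 < P.salary r) (hC : 0 < P.hireFee r) {t : ℕ} (h : r ∈ hired t) :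
    ∃ s ≤ t, isStartF P hired r s ∧ t < s + eta P r := by
  by_contra hcon
  push_neg at hcon
  have hst : isStartF P hired r t := by
    rw [isStartF_iff]
    exact ⟨h, fun s hs hss => hcon s hs.le hss⟩
  have := eta_pos P r hσ hC; have := hcon t le_rfl hst; omega

/-- If `t` is a start but not a new-hire point, then `t - η` is the previous start,
`η ≤ t`, and `r ∈ hired (t-1)`. -/
lemma prev_start (hσ : 0 < P.salary r) (hC : 0 < P.hireFee r) {t : ℕ}
    (ht : isStartF P hired r t) (hnew : r ∉ newHires hired t) :
    eta P r ≤ t ∧ isStartF P hired r (t - eta P r) ∧ r ∈ hired (t - 1) := by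
  have hmem : r ∈ hired t := start_mem_hired P hired r ht
  have ht0 : t ≠ 0 := by
    rintro rfl
    exact hnew (by simpa [newHires] using hmem)
  have hprev : r ∈ hired (t - 1) := by
    by_contra hp
    exact hnew (by simp [newHires, ht0, hmem, hp])
  obtain ⟨s, hs_le, hs_start, hs_cov⟩ := hired_covered P hired r hσ hC hprev
  have hslt : s < t := lt_of_le_of_lt hs_le (Nat.sub_lt (Nat.pos_of_ne_zero ht0) one_pos)
  have h1 : s + eta P r ≤ t := start_spacing P hired r hs_start ht hslt
  have h2 : t ≤ s + eta P r := by omega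
  have hseq : s + eta P r = t := le_antisymm h1 h2
  have : s = t - eta P r := by omega
  subst this
  exact ⟨by omega, hs_start, hprev⟩
end lems

lemma key {n m : ℕ} (P : TFOParams n m) (hired : ℕ → Finset (Fin n)) (T : ℕ) (r : Fin n)
    (hσ : 0 < P.salary r) (hC : 0 < P.hireFee r) :
    P.hireFee r * ((Finset.range T).filter (fun t => isStartF P hired r t)).card ≤
      P.hireFee r * ((Finset.range T).filter (fun t => r ∈ newHires hired t)).card
        + P.salary r * ((Finset.range T).filter (fun t => r ∈ hired t)).card := by
  classical
  set η := eta P r with hη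
  set St := (Finset.range T).filter (fun t => isStartF P hired r t) with hSt
  set Nw := (Finset.range T).filter (fun t => r ∈ newHires hired t) with hNw
  set Hd := (Finset.range T).filter (fun t => r ∈ hired t) with hHd
  set A := St.filter (fun t => r ∈ newHires hired t) with hA
  set pB : ℕ → Prop := fun t => ∃ v ∈ Finset.Ioo (t - η) t, r ∈ newHires hired v with hpB
  set B := (St \ A).filter pB with hB
  set Cs := (St \ A) \ B with hCs
  -- basic memberships
  have hSt_start : ∀ t ∈ St, isStartF P hired r t ∧ t < T := by
    intro t ht
    have := Finset.mem_filter.mp ht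
    exact ⟨this.2, Finset.mem_range.mp this.1⟩
  have hStA : ∀ t ∈ St \ A, isStartF P hired r t ∧ t < T ∧ r ∉ newHires hired t := by
    intro t ht
    obtain ⟨h1, h2⟩ := Finset.mem_sdiff.mp ht
    exact ⟨(hSt_start t h1).1, (hSt_start t h1).2, fun hn => h2 (Finset.mem_filter.mpr ⟨h1, hn⟩)⟩
  have hprev : ∀ t ∈ St \ A, η ≤ t ∧ isStartF P hired r (t - η) ∧ r ∈ hired (t - 1) := by
    intro t ht
    obtain ⟨h1, _, h3⟩ := hStA t ht
    exact prev_start P hired r hσ hC h1 h3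
  have hnostart : ∀ t ∈ St \ A, ∀ v, t - η < v → v < t → ¬ isStartF P hired r v := by
    intro t ht v hv1 hv2 hvstart
    obtain ⟨hηt, hstart, _⟩ := hprev t ht
    have := start_spacing P hired r hstart hvstart (by omega)
    omega
  -- the injection from A ∪ B into Nw
  have hBp : ∀ t ∈ B, pB t := fun t ht => (Finset.mem_filter.mp ht).2
  have hB_sub : B ⊆ St \ A := Finset.filter_subset _ _
  set ψ : ℕ → ℕ := fun t => if h : t ∈ B then (hBp t h).choose else t with hψ
  have hψB : ∀ t (h : t ∈ B), ψ t ∈ Finset.Ioo (t - η) t ∧ r ∈ newHires hired (ψ t) := by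
    intro t h
    have := (hBp t h).choose_spec
    simp only [hψ, dif_pos h]
    exact this
  have hψ_mem : ∀ t ∈ A ∪ B, ψ t ∈ Nw := by
    intro t ht
    by_cases h : t ∈ B
    · obtain ⟨hIoo, hnew⟩ := hψB t h
      have := (hStA t (hB_sub h)).2.1
      have := Finset.mem_Ioo.mp hIoo
      exact Finset.mem_filter.mpr ⟨Finset.mem_range.mpr (by omega), hnew⟩
    · have htA : t ∈ A := by
        rcases Finset.mem_union.mp ht with h' | h'
        · exact h'
        · exact absurd h' h
      have := Finset.mem_filter.mp htA
      simp only [hψ, dif_neg h]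
      exact Finset.mem_filter.mpr ⟨(Finset.mem_filter.mp this.1).1, this.2⟩
  have hψ_notstart : ∀ t (h : t ∈ B), ¬ isStartF P hired r (ψ t) := by
    intro t h
    obtain ⟨hIoo, _⟩ := hψB t h
    have := Finset.mem_Ioo.mp hIoo
    exact hnostart t (hB_sub h) (ψ t) this.1 this.2
  have hmono : ∀ t₁ ∈ B, ∀ t₂ ∈ B, t₁ < t₂ → ψ t₁ < ψ t₂ := by
    intro t₁ h₁ t₂ h₂ hlt
    have hs₁ := (hStA t₁ (hB_sub h₁)).1
    have hs₂ := (hStA t₂ (hB_sub h₂)).1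
    have hsp := start_spacing P hired r hs₁ hs₂ hlt
    have i₁ := Finset.mem_Ioo.mp (hψB t₁ h₁).1
    have i₂ := Finset.mem_Ioo.mp (hψB t₂ h₂).1
    omega
  have hinj : Set.InjOn ψ (A ∪ B : Finset ℕ) := by
    intro t₁ h₁ t₂ h₂ heq
    simp only [Finset.coe_union, Set.mem_union, Finset.mem_coe] at h₁ h₂
    by_cases b₁ : t₁ ∈ B <;> by_cases b₂ : t₂ ∈ B
    · by_contra hne
      rcases Nat.lt_or_ge t₁ t₂ with h | h
      · exact absurd heq (Nat.ne_of_lt (hmono t₁ b₁ t₂ b₂ h))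
      · have : t₂ < t₁ := by omega
        exact absurd heq.symm (Nat.ne_of_lt (hmono t₂ b₂ t₁ b₁ this))
    · exfalso
      have hA₂ : t₂ ∈ A := h₂.resolve_right b₂
      have : isStartF P hired r (ψ t₂) := by
        simp only [hψ, dif_neg b₂]
        exact (hSt_start t₂ (Finset.mem_filter.mp hA₂).1).1
      rw [← heq] at this
      exact hψ_notstart t₁ b₁ this
    · exfalso
      have hA₁ : t₁ ∈ A := h₁.resolve_right b₁
      have : isStartF P hired r (ψ t₁) := by
        simp only [hψ, dif_neg b₁]
        exact (hSt_start t₁ (Finset.mem_filter.mp hA₁).1).1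
      rw [heq] at this
      exact hψ_notstart t₂ b₂ this
    · simp only [hψ, dif_neg b₁, dif_neg b₂] at heq
      exact heq
  have hABdisj : Disjoint A B := by
    rw [Finset.disjoint_left]
    intro a ha hb
    exact (Finset.mem_sdiff.mp (hB_sub hb)).2 ha
  have hABcard : A.card + B.card ≤ Nw.card := by
    rw [← Finset.card_union_of_disjoint hABdisj]
    exact Finset.card_le_card_of_injOn ψ hψ_mem hinj
  -- the Cs part
  have hCsHd : ∀ t ∈ Cs, Finset.Ico (t - η) t ⊆ Hd := by
    intro t ht
    have htSA : t ∈ St \ A := (Finset.mem_sdiff.mp ht).1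
    have htnB : t ∉ B := (Finset.mem_sdiff.mp ht).2
    have hnpB : ¬ pB t := fun hp => htnB (Finset.mem_filter.mpr ⟨htSA, hp⟩)
    obtain ⟨hηt, hstart, hprev1⟩ := hprev t htSA
    have htT := (hStA t htSA).2.1
    intro u hu
    obtain ⟨hu1, hu2⟩ := Finset.mem_Ico.mp hu
    refine Finset.mem_filter.mpr ⟨Finset.mem_range.mpr (by omega), ?_⟩
    by_contra hnu
    -- u is not hired; find a new-hire event in (t-η, t), contradicting ¬pB t
    have hune : u ≠ t - η := fun h => hnu (h ▸ start_mem_hired P hired r hstart)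
    have hunt : u ≠ t - 1 := fun h => hnu (h ▸ hprev1)
    have hult : u < t - 1 := by omega
    set V := (Finset.Ioc u (t - 1)).filter (fun v => r ∈ hired v) with hV
    have hVne : (t - 1) ∈ V :=
      Finset.mem_filter.mpr ⟨Finset.mem_Ioc.mpr ⟨hult, le_rfl⟩, hprev1⟩
    set v := V.min' ⟨t - 1, hVne⟩ with hv
    have hvV : v ∈ V := Finset.min'_mem _ _
    obtain ⟨hvIoc, hvhired⟩ := Finset.mem_filter.mp hvV
    obtain ⟨hv1, hv2⟩ := Finset.mem_Ioc.mp hvIoc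
    have hvm1 : r ∉ hired (v - 1) := by
      rcases Nat.eq_or_lt_of_le (Nat.succ_le_of_lt hv1) with h | h
      · have : v - 1 = u := by omega
        exact this ▸ hnu
      · intro hcon
        have hm : v - 1 ∈ V := Finset.mem_filter.mpr ⟨Finset.mem_Ioc.mpr ⟨by omega, by omega⟩, hcon⟩
        have := Finset.min'_le V (v - 1) hm
        omega
    have hvnew : r ∈ newHires hired v := by
      have hv0 : v ≠ 0 := by omega
      simp [newHires, hv0, hvhired, hvm1]
    exact hnpB ⟨v, Finset.mem_Ioo.mpr ⟨by omega, by omega⟩, hvnew⟩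
  have hCsdisj : (Cs : Set ℕ).PairwiseDisjoint (fun t => Finset.Ico (t - η) t) := by
    intro t₁ h₁ t₂ h₂ hne
    simp only [Finset.mem_coe] at h₁ h₂
    have hs₁ := (hStA t₁ (Finset.mem_sdiff.mp h₁).1).1
    have hs₂ := (hStA t₂ (Finset.mem_sdiff.mp h₂).1).1
    have key : ∀ a b : ℕ, a < b → isStartF P hired r a → isStartF P hired r b →
        Disjoint (Finset.Ico (a - η) a) (Finset.Ico (b - η) b) := by
      intro a b hab ha hb
      have := start_spacing P hired r ha hb hab
      rw [Finset.disjoint_left]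
      intro u hu1 hu2
      have := Finset.mem_Ico.mp hu1
      have := Finset.mem_Ico.mp hu2
      omega
    rcases Nat.lt_or_ge t₁ t₂ with h | h
    · exact key t₁ t₂ h hs₁ hs₂
    · exact (key t₂ t₁ (by omega) hs₂ hs₁).symm
  have hCscard : Cs.card * η ≤ Hd.card := by
    have hsub : Cs.biUnion (fun t => Finset.Ico (t - η) t) ⊆ Hd := by
      intro u hu
      obtain ⟨t, ht, hut⟩ := Finset.mem_biUnion.mp hu
      exact hCsHd t ht hut
    have hcard : (Cs.biUnion (fun t => Finset.Ico (t - η) t)).card = Cs.card * η := by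
      rw [Finset.card_biUnion hCsdisj]
      have : ∀ t ∈ Cs, (Finset.Ico (t - η) t).card = η := by
        intro t ht
        have := (hprev t (Finset.mem_sdiff.mp ht).1).1
        rw [Nat.card_Ico]
        omega
      rw [Finset.sum_congr rfl this, Finset.sum_const, smul_eq_mul]
    calc Cs.card * η = _ := hcard.symm
      _ ≤ Hd.card := Finset.card_le_card hsub
  -- split the cardinality of St
  have hsplit : St.card = A.card + B.card + Cs.card := by
    have e1 : (St \ A).card + A.card = St.card :=
      Finset.card_sdiff_add_card_eq_card (Finset.filter_subset _ _)
    have e2 : ((St \ A) \ B).card + B.card = (St \ A).card :=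
      Finset.card_sdiff_add_card_eq_card hB_sub
    have e3 : Cs.card = ((St \ A) \ B).card := rfl
    omega
  -- final arithmetic
  have hCle := hire_le_eta_mul P r hσ
  have p1 : P.hireFee r * ((A.card : ℝ) + B.card) ≤ P.hireFee r * Nw.card := by
    apply mul_le_mul_of_nonneg_left _ hC.le
    exact_mod_cast hABcard
  have p2 : P.hireFee r * (Cs.card : ℝ) ≤ ((η : ℝ) * P.salary r) * Cs.card :=
    mul_le_mul_of_nonneg_right hCle (Nat.cast_nonneg _)
  have p3 : P.salary r * ((Cs.card : ℝ) * η) ≤ P.salary r * Hd.card := by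
    apply mul_le_mul_of_nonneg_left _ hσ.le
    exact_mod_cast hCscard
  have hsplit' : (St.card : ℝ) = (A.card : ℝ) + B.card + Cs.card := by exact_mod_cast hsplit
  rw [hsplit']
  nlinarith [p1, p2, p3]

lemma sum_swap' {n : ℕ} (T : ℕ) (F : ℕ → Finset (Fin n)) (f : Fin n → ℝ) :
    ∑ t ∈ Finset.range T, ∑ r ∈ F t, f r
      = ∑ r : Fin n, f r * ((Finset.range T).filter (fun t => r ∈ F t)).card := by
  classical
  calc ∑ t ∈ Finset.range T, ∑ r ∈ F t, f r
      = ∑ t ∈ Finset.range T, ∑ r : Fin n, if r ∈ F t then f r else 0 := by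
        refine Finset.sum_congr rfl fun t _ => ?_
        rw [← Finset.sum_filter]
        congr 1
        ext r
        simp
    _ = ∑ r : Fin n, ∑ t ∈ Finset.range T, if r ∈ F t then f r else 0 := Finset.sum_comm
    _ = ∑ r : Fin n, f r * ((Finset.range T).filter (fun t => r ∈ F t)).card := by
        refine Finset.sum_congr rfl fun r _ => ?_
        rw [← Finset.sum_filter, Finset.sum_const, nsmul_eq_mul, mul_comm]

/-- Any feasible solution to the TFO problem with total cost
`C^TFO = tfoCost P T hired outs` can be converted into a feasible solution to the
Alt-TFO problem (a schedule of hiring intervals of length `η_r = ⌈C_r/σ_r⌉` at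
per-interval cost `Ĉ_r = 3·C_r`, together with outsourcing decisions) whose total cost
is at most `3 · C^TFO`. -/
theorem tfo_solution_to_alt_solution
    (n m T : ℕ) (P : TFOParams n m)
    (hσ : ∀ r, 0 < P.salary r) (hC : ∀ r, 0 < P.hireFee r)
    (hlam : ∀ r, 0 ≤ P.outFee r)
    (J : ℕ → Finset (Fin m))
    (hired outs : ℕ → Finset (Fin n))
    (hfeas : Covers P T J hired outs) :
    ∃ starts : ℕ → Finset (Fin n),
      AltCovers P T J starts outs ∧
        altCost P T starts outs ≤ 3 * tfoCost P T hired outs := by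
  classical
  set starts : ℕ → Finset (Fin n) :=
    fun s => Finset.univ.filter (fun r => isStartF P hired r s) with hstarts
  refine ⟨starts, ?_, ?_⟩
  · -- coverage
    intro t ht ℓ hℓ
    obtain ⟨r, hr, hskill⟩ := hfeas t ht ℓ hℓ
    refine ⟨r, ?_, hskill⟩
    rcases hr with hr | hr
    · left
      obtain ⟨s, hs_le, hs_start, hs_cov⟩ := hired_covered P hired r (hσ r) (hC r) hr
      simp only [altHired, Finset.mem_filter, Finset.mem_univ, true_and]
      exact ⟨s, Finset.mem_range.mpr (by omega),
        Finset.mem_filter.mpr ⟨Finset.mem_univ r, hs_start⟩, hs_cov⟩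
    · right; exact hr
  · -- cost
    have hfilter : ∀ r : Fin n, (Finset.range T).filter (fun t => r ∈ starts t)
        = (Finset.range T).filter (fun t => isStartF P hired r t) := by
      intro r
      ext t
      simp [hstarts]
    have hS : ∑ t ∈ Finset.range T, ∑ r ∈ starts t, 3 * P.hireFee r
        = ∑ r : Fin n, 3 * P.hireFee r
            * ((Finset.range T).filter (fun t => isStartF P hired r t)).card := by
      rw [sum_swap']
      exact Finset.sum_congr rfl fun r _ => by rw [hfilter r]
    have hN : ∑ t ∈ Finset.range T, ∑ r ∈ newHires hired t, P.hireFee r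
        = ∑ r : Fin n, P.hireFee r
            * ((Finset.range T).filter (fun t => r ∈ newHires hired t)).card := sum_swap' T _ _
    have hH : ∑ t ∈ Finset.range T, ∑ r ∈ hired t, P.salary r
        = ∑ r : Fin n, P.salary r
            * ((Finset.range T).filter (fun t => r ∈ hired t)).card := sum_swap' T _ _
    have hkey : ∑ r : Fin n, P.hireFee r
          * ((Finset.range T).filter (fun t => isStartF P hired r t)).card
        ≤ (∑ r : Fin n, P.hireFee r
            * ((Finset.range T).filter (fun t => r ∈ newHires hired t)).card)
          + ∑ r : Fin n, P.salary r
            * ((Finset.range T).filter (fun t => r ∈ hired t)).card := by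
      rw [← Finset.sum_add_distrib]
      exact Finset.sum_le_sum fun r _ => key P hired T r (hσ r) (hC r)
    have hO : 0 ≤ ∑ t ∈ Finset.range T, ∑ r ∈ outs t, P.outFee r :=
      Finset.sum_nonneg fun t _ => Finset.sum_nonneg fun r _ => hlam r
    have h3S : ∑ r : Fin n, 3 * P.hireFee r
          * ((Finset.range T).filter (fun t => isStartF P hired r t)).card
        = 3 * ∑ r : Fin n, P.hireFee r
            * ((Finset.range T).filter (fun t => isStartF P hired r t)).card := by
      rw [Finset.mul_sum]
      exact Finset.sum_congr rfl fun r _ => by ring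
    rw [altCost, tfoCost]
    rw [Finset.sum_add_distrib]
    have htfo : ∑ t ∈ Finset.range T,
        ((∑ r ∈ newHires hired t, P.hireFee r) + (∑ r ∈ hired t, P.salary r)
          + (∑ r ∈ outs t, P.outFee r))
        = (∑ t ∈ Finset.range T, ∑ r ∈ newHires hired t, P.hireFee r)
          + (∑ t ∈ Finset.range T, ∑ r ∈ hired t, P.salary r)
          + (∑ t ∈ Finset.range T, ∑ r ∈ outs t, P.outFee r) := by
      rw [Finset.sum_add_distrib, Finset.sum_add_distrib]
    rw [htfo, hS, hN, hH, h3S]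
    linarith
end

section
/- The TFO-Heuristic algorithm has unbounded competitive ratio for the TFO problem: for every bound B > 0 there exist an instance and a task sequence on which the total cost incurred by TFO-Heuristic exceeds B times the optimal offline cost. In particular, for two workers W_1 and W_2 both possessing the single skill ℓ, with λ_1 = 1, λ_2 = 1 + ε, C_1 = M, C_2 = 2, sufficiently small salaries σ_1, σ_2 > 0, a sufficiently large M, and a long enough sequence of identical tasks {ℓ}, the ratio of TFO-Heuristic's cost to the optimal cost exceeds B. -/
open scoped BigOperators Classical

/-- The bad instance for TFO-Heuristic: a single skill `ℓ` and two workers `W₁`, `W₂`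
that both possess it, with outsourcing fees `λ₁ = 1`, `λ₂ = 1 + ε`, hiring fees
`C₁ = M`, `C₂ = 2`, and salaries `σ₁`, `σ₂`. -/
noncomputable def badParamsSal (M ε σ₁ σ₂ : ℝ) : TFOParams 2 1 where
  skills := fun _ => {0}
  outFee := ![1, 1 + ε]
  hireFee := ![M, 2]
  salary := ![σ₁, σ₂]

/-- The state `(δ₁, remaining hired steps of W₁, total cost)` of the TFO-Heuristic
after `t` identical tasks `{ℓ}` on the instance `badParamsSal M ε σ₁ σ₂`, where
`η = η₁ = ⌈M/σ₁⌉` is worker `W₁`'s hiring-interval length.  Since `λ₁ = 1 < 1 + ε = λ₂`,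
the greedy set-cover step always selects worker `W₁`: while `W₁` is not hired, each
task is outsourced to `W₁` (paying `λ₁ = 1` and increasing `δ₁` by `λ₁ = 1`), `W₁` is
hired (paying `C₁ = M`, resetting `δ₁` to 0) as soon as `δ₁ ≥ C₁ + η₁·σ₁ = M + η·σ₁`;
while hired, each task is covered by `W₁` who is paid the salary `σ₁` per step, and
`W₁` is fired after `η₁ = η` tasks, after which the cycle repeats. -/
noncomputable def tfoHeurState (M σ₁ : ℝ) (η : ℕ) : ℕ → ℝ × ℕ × ℝ
  | 0 => (0, 0, 0)
  | t + 1 =>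
      let s := tfoHeurState M σ₁ η t
      if 0 < s.2.1 then (s.1, s.2.1 - 1, s.2.2 + σ₁)
      else if M + η * σ₁ ≤ s.1 + 1 then (0, η, s.2.2 + 1 + M)
      else (s.1 + 1, 0, s.2.2 + 1)

/-- Total cost incurred by TFO-Heuristic after `t` tasks (with `η = ⌈M/σ₁⌉`). -/
noncomputable def tfoHeurCost (M σ₁ : ℝ) (t : ℕ) : ℝ :=
  (tfoHeurState M σ₁ ⌈M / σ₁⌉₊ t).2.2


private lemma heur_state_eq (M σ₁ : ℝ) (η : ℕ) (hσ : 0 ≤ σ₁) :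
    ∀ t : ℕ, (∀ s : ℕ, s < t → (s : ℝ) + 1 < M) →
      tfoHeurState M σ₁ η t = ((t : ℝ), 0, (t : ℝ)) := by
  intro t
  induction t with
  | zero => intro _; simp [tfoHeurState]
  | succ t ih =>
    intro h
    have hih := ih (fun s hs => h s (Nat.lt_succ_of_lt hs))
    have ht : (t : ℝ) + 1 < M := h t (Nat.lt_succ_self t)
    have hη : (0:ℝ) ≤ (η:ℝ) * σ₁ := mul_nonneg (Nat.cast_nonneg _) hσ
    rw [tfoHeurState]
    simp only [hih]
    have hcond : ¬ (M + (η:ℝ) * σ₁ ≤ (t:ℝ) + 1) := by nlinarith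
    simp only [lt_irrefl, if_false, hcond]
    push_cast
    simp

private lemma opt_bounds (T : ℕ) (hT : 1 ≤ T) :
    1 ≤ tfoOpt (badParamsSal ((T:ℝ)+1) 1 1 (1/(T:ℝ))) T (fun _ => {0}) ∧
    tfoOpt (badParamsSal ((T:ℝ)+1) 1 1 (1/(T:ℝ))) T (fun _ => {0}) ≤ 3 := by
  have hTpos : (0:ℝ) < (T:ℝ) := by exact_mod_cast Nat.pos_of_ne_zero (by omega)
  set M : ℝ := (T:ℝ) + 1 with hM
  set σ₂ : ℝ := 1 / (T:ℝ) with hσ₂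
  set P := badParamsSal M 1 1 σ₂ with hP
  have houtFee : ∀ r : Fin 2, (1:ℝ) ≤ P.outFee r := by
    intro r; fin_cases r <;> simp [hP, badParamsSal] <;> norm_num
  have hhireFee : ∀ r : Fin 2, (1:ℝ) ≤ P.hireFee r := by
    intro r; fin_cases r <;> simp [hP, badParamsSal]; linarith
  have hsal : ∀ r : Fin 2, (0:ℝ) ≤ P.salary r := by
    intro r; fin_cases r <;> simp [hP, badParamsSal] <;> positivity
  set S : Set ℝ :=
      {c | ∃ hired outs, Covers P T (fun _ => {0}) hired outs ∧
        c = tfoCost P T hired outs} with hS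
  have hlow : ∀ c ∈ S, (1:ℝ) ≤ c := by
    rintro c ⟨hired, outs, hcov, rfl⟩
    have hterm : ∀ t, (0:ℝ) ≤
        ((∑ r ∈ newHires hired t, P.hireFee r) + (∑ r ∈ hired t, P.salary r)
          + (∑ r ∈ outs t, P.outFee r)) := by
      intro t
      have h1 : (0:ℝ) ≤ ∑ r ∈ newHires hired t, P.hireFee r :=
        Finset.sum_nonneg fun r _ => le_trans zero_le_one (hhireFee r)
      have h2 : (0:ℝ) ≤ ∑ r ∈ hired t, P.salary r :=
        Finset.sum_nonneg fun r _ => hsal r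
      have h3 : (0:ℝ) ≤ ∑ r ∈ outs t, P.outFee r :=
        Finset.sum_nonneg fun r _ => le_trans zero_le_one (houtFee r)
      linarith
    have hfirst : (1:ℝ) ≤
        ((∑ r ∈ newHires hired 0, P.hireFee r) + (∑ r ∈ hired 0, P.salary r)
          + (∑ r ∈ outs 0, P.outFee r)) := by
      obtain ⟨r, hr, -⟩ := hcov 0 (by omega) 0 (by simp)
      have h1 : (0:ℝ) ≤ ∑ r ∈ newHires hired 0, P.hireFee r :=
        Finset.sum_nonneg fun r _ => le_trans zero_le_one (hhireFee r)
      have h2 : (0:ℝ) ≤ ∑ r ∈ hired 0, P.salary r :=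
        Finset.sum_nonneg fun r _ => hsal r
      have h3 : (0:ℝ) ≤ ∑ r ∈ outs 0, P.outFee r :=
        Finset.sum_nonneg fun r _ => le_trans zero_le_one (houtFee r)
      rcases hr with hr | hr
      · have hmem : r ∈ newHires hired 0 := by simpa [newHires] using hr
        have := Finset.single_le_sum (f := fun r => P.hireFee r)
          (fun r _ => le_trans zero_le_one (hhireFee r)) hmem
        linarith [hhireFee r]
      · have := Finset.single_le_sum (f := fun r => P.outFee r)
          (fun r _ => le_trans zero_le_one (houtFee r)) hr
        linarith [houtFee r]
    calc (1:ℝ) ≤ _ := hfirst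
      _ ≤ tfoCost P T hired outs :=
        Finset.single_le_sum (fun t _ => hterm t)
          (Finset.mem_range.mpr (by omega))
  have hmem3 : (3:ℝ) ∈ S := by
    refine ⟨fun _ => {1}, fun _ => ∅, ?_, ?_⟩
    · intro t _ ℓ hℓ
      exact ⟨1, Or.inl (by simp), by simp [hP, badParamsSal]; exact Subsingleton.elim ℓ 0⟩
    · have hcost : tfoCost P T (fun _ => {1}) (fun _ => ∅)
          = ∑ t ∈ Finset.range T, ((if t = 0 then (2:ℝ) else 0) + σ₂) := by
        unfold tfoCost
        refine Finset.sum_congr rfl fun t _ => ?_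
        by_cases h0 : t = 0 <;> simp [newHires, h0, hP, badParamsSal]
      rw [hcost, Finset.sum_add_distrib, Finset.sum_ite_eq'
          (Finset.range T) 0 (fun _ => (2:ℝ))]
      simp only [Finset.mem_range, Finset.sum_const, Finset.card_range,
        nsmul_eq_mul]
      rw [if_pos (by omega : 0 < T), hσ₂, mul_one_div, div_self hTpos.ne']
      norm_num
  constructor
  · exact le_csInf ⟨3, hmem3⟩ hlow
  · exact csInf_le ⟨1, hlow⟩ hmem3

/-- The TFO-Heuristic algorithm has unbounded competitive ratio for
the TFO problem: for every bound `B > 0` there exist an instance and a task sequence on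
which the total cost incurred by TFO-Heuristic exceeds `B` times the optimal offline
cost.  In particular, for two workers `W₁` and `W₂` both possessing the single skill
`ℓ`, with `λ₁ = 1`, `λ₂ = 1 + ε`, `C₁ = M`, `C₂ = 2`, sufficiently small salaries
`σ₁, σ₂ > 0`, a sufficiently large `M`, and a long enough sequence of `T` identical
tasks `{ℓ}`, the ratio of TFO-Heuristic's cost to the optimal cost exceeds `B`. -/
theorem tfoHeuristic_unbounded_ratio :
    ∀ B : ℝ, 0 < B →
      ∃ (M ε σ₁ σ₂ : ℝ) (T : ℕ),
        0 < ε ∧ 0 < σ₁ ∧ 0 < σ₂ ∧ 2 < M ∧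
        0 < tfoOpt (badParamsSal M ε σ₁ σ₂) T (fun _ => {0}) ∧
        B * tfoOpt (badParamsSal M ε σ₁ σ₂) T (fun _ => {0}) < tfoHeurCost M σ₁ T := by
  intro B hB
  set T : ℕ := ⌈3 * B⌉₊ + 2 with hT
  obtain ⟨hopt1, hopt3⟩ := opt_bounds T (by rw [hT]; omega)
  have hc : 0 < ⌈3 * B⌉₊ := Nat.ceil_pos.mpr (by linarith)
  have hTR : (3:ℝ) ≤ (T:ℝ) := by exact_mod_cast (by rw [hT]; omega : 3 ≤ T)
  have hTpos : (0:ℝ) < (T:ℝ) := by linarith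
  refine ⟨(T:ℝ) + 1, 1, 1, 1 / (T:ℝ), T, one_pos, one_pos, by positivity,
    by linarith, by linarith, ?_⟩
  have hcost : tfoHeurCost ((T:ℝ) + 1) 1 T = (T:ℝ) := by
    unfold tfoHeurCost
    rw [heur_state_eq _ _ _ zero_le_one T (fun s hs => by
      have hs' : (s:ℝ) < (T:ℝ) := by exact_mod_cast hs
      linarith)]
  have h3B : 3 * B < (T:ℝ) := by
    have h1 : 3 * B ≤ (⌈3 * B⌉₊ : ℝ) := Nat.le_ceil _
    have h2 : (T:ℝ) = (⌈3 * B⌉₊ : ℝ) + 2 := by rw [hT]; push_cast; ring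
    linarith
  rw [hcost]
  have hmul := mul_le_mul_of_nonneg_left hopt3 hB.le
  linarith
end
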